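/- arXiv:2506.17173 — 3 statements merged into one kernel-verified Lean document; each statement's English description precedes it below -/
import Mathlib

section
/- The function v(z) = log|z|, transplanted to the exterior of the ellipse via the inverse of w(z) = αz + β/z, has the expansion v(y) = log|y| - log α - αβ(y₁² - y₂²)/|y|⁴ + O(|y|⁻⁴) as |y| → ∞. -/
/-!
Put `t = β / (α z²)`, so that `w = α z + β / z = α z (1 + t)` and `α β / w² = t / (1 + t)²`.
Then `log |z| - (log |w| - log α - α β Re (w⁻²))` is exactly `Re (t / (1 + t)² - log (1 + t))`;
both terms agree with `t` to first order, so the difference is `O(|t|²) = O(|z|⁻⁴) = O(|w|⁻⁴)`,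
the last step because `w / z → α ≠ 0`.
-/

open Filter Asymptotics Topology Bornology

namespace Complex

lemma isBigO_div_one_add_sq_sub_self :
    (fun u : ℂ => u / (1 + u) ^ 2 - u) =O[𝓝 0] fun u => u ^ 2 := by
  have hbdd : (fun u : ℂ => -(2 + u) / (1 + u) ^ 2) =O[𝓝 0] fun _ => (1 : ℂ) :=
    (ContinuousAt.tendsto (by fun_prop (disch := norm_num))).isBigO_one ℂ
  refine ((isBigO_refl (fun u : ℂ => u ^ 2) _).mul hbdd).congr' ?_ (by simp)
  filter_upwards [eventually_ne_nhds (show (0 : ℂ) ≠ -1 by norm_num)] with u hu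
  have : 1 + u ≠ 0 := fun h => hu (by linear_combination h)
  field_simp
  ring

lemma isBigO_div_one_add_sq_sub_log :
    (fun u : ℂ => u / (1 + u) ^ 2 - log (1 + u)) =O[𝓝 0] fun u => u ^ 2 :=
  (isBigO_div_one_add_sq_sub_self.sub log_sub_self_isBigO).congr_left fun u => by ring

lemma inv_sq_re (w : ℂ) : ((w ^ 2)⁻¹).re = (w.re ^ 2 - w.im ^ 2) / ‖w‖ ^ 4 := by
  rw [inv_re, normSq_eq_norm_sq, norm_pow, sq w, mul_re]
  ring

end Complex

open Complex

section Joukowski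

variable {α β : ℝ} {z : ℂ}

lemma joukowski_eq_mul_one_add (hα : α ≠ 0) (hz : z ≠ 0) :
    (α : ℂ) * z + β / z = α * z * (1 + β / (α * z ^ 2)) := by
  have : (α : ℂ) ≠ 0 := ofReal_ne_zero.2 hα
  field_simp

lemma log_norm_joukowski (hα : α ≠ 0) (hz : z ≠ 0) (ht : 1 + β / (α * z ^ 2) ≠ 0) :
    Real.log ‖(α : ℂ) * z + β / z‖ =
      Real.log α + Real.log ‖z‖ + (log (1 + β / (α * z ^ 2))).re := by
  rw [joukowski_eq_mul_one_add hα hz, norm_mul, norm_mul, norm_real, Real.norm_eq_abs,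
    Real.log_mul (by positivity) (norm_ne_zero_iff.2 ht),
    Real.log_mul (by positivity) (by positivity), Real.log_abs, log_re]

lemma quadrupole_joukowski (hα : α ≠ 0) (hz : z ≠ 0) :
    α * β * (((α : ℂ) * z + β / z).re ^ 2 - ((α : ℂ) * z + β / z).im ^ 2) /
      ‖(α : ℂ) * z + β / z‖ ^ 4 =
      (β / (α * z ^ 2) / (1 + β / (α * z ^ 2)) ^ 2).re := by
  rw [mul_div_assoc, ← inv_sq_re, ← re_ofReal_mul, joukowski_eq_mul_one_add hα hz]
  congr 1
  push_cast
  field_simp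

lemma log_norm_sub_joukowski_expansion (hα : α ≠ 0) (hz : z ≠ 0)
    (ht : 1 + β / (α * z ^ 2) ≠ 0) :
    Real.log ‖z‖ -
        (Real.log ‖(α : ℂ) * z + β / z‖ - Real.log α -
          α * β * (((α : ℂ) * z + β / z).re ^ 2 - ((α : ℂ) * z + β / z).im ^ 2) /
            ‖(α : ℂ) * z + β / z‖ ^ 4) =
      (β / (α * z ^ 2) / (1 + β / (α * z ^ 2)) ^ 2 - log (1 + β / (α * z ^ 2))).re := by
  rw [log_norm_joukowski hα hz ht, quadrupole_joukowski hα hz, sub_re]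
  ring

lemma tendsto_joukowski_param (α β : ℝ) :
    Tendsto (fun z : ℂ => β / (α * z ^ 2)) (cobounded ℂ) (𝓝 0) := by
  have : Tendsto (fun z : ℂ => (β / α : ℂ) * z⁻¹ ^ 2) (cobounded ℂ) (𝓝 0) := by
    simpa using (tendsto_inv₀_cobounded.pow 2).const_mul (β / α : ℂ)
  exact this.congr fun z => by rw [inv_pow, ← div_eq_mul_inv, div_div]

lemma isBigO_inv_joukowski (hα : α ≠ 0) :
    (fun z : ℂ => z⁻¹) =O[cobounded ℂ] fun z => ((α : ℂ) * z + β / z)⁻¹ := by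
  have hlim : Tendsto (fun z : ℂ => ((α : ℂ) * z + β / z) / z) (cobounded ℂ) (𝓝 α) := by
    have : Tendsto (fun z : ℂ => (α : ℂ) + β * z⁻¹ ^ 2) (cobounded ℂ) (𝓝 α) := by
      simpa using ((tendsto_inv₀_cobounded.pow 2).const_mul (β : ℂ)).const_add (α : ℂ)
    refine this.congr' ?_
    filter_upwards [eventually_ne_cobounded 0] with z hz
    field_simp
  refine ((hlim.isBigO_one ℂ).mul (isBigO_refl _ _)).congr' ?_
    (Eventually.of_forall fun _ => one_mul _)
  filter_upwards [hlim.eventually_ne (ofReal_ne_zero.2 hα)] with z hwz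
  have hw : (α : ℂ) * z + β / z ≠ 0 := fun h => hwz (by rw [h, zero_div])
  rw [div_mul_eq_mul_div, mul_inv_cancel₀ hw, one_div]

end Joukowski

/-- With y = w(z) = αz + β/z mapping {|z|>1} to the exterior of the ellipse, the
function v₀(y) = log|z(y)| satisfies
v₀(y) = log|y| - log α - αβ(y₁² - y₂²)/|y|⁴ + O(|y|⁻⁴) as |y| → ∞.
Stated in the z-variable: log|z| minus the claimed expansion evaluated at y = w(z) is
O(|w(z)|⁻⁴) as |z| → ∞. -/
theorem stmt_6 (α β : ℝ) (hαβ : α > β) (hβ : β > 0) :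
    (fun z : ℂ =>
        Real.log ‖z‖ -
          (Real.log (‖(α : ℂ) * z + (β : ℂ) / z‖) - Real.log α -
            α * β * (((α : ℂ) * z + (β : ℂ) / z).re ^ 2 - ((α : ℂ) * z + (β : ℂ) / z).im ^ 2)
              / (‖(α : ℂ) * z + (β : ℂ) / z‖) ^ 4))
      =O[Filter.comap (fun z : ℂ => ‖z‖) Filter.atTop]
      (fun z : ℂ => ((‖(α : ℂ) * z + (β : ℂ) / z‖) ^ 4)⁻¹) := by
  have hα : α ≠ 0 := (hβ.trans hαβ).ne'
  have ht := tendsto_joukowski_param α β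
  have hrem : (fun z : ℂ => β / (α * z ^ 2) / (1 + β / (α * z ^ 2)) ^ 2 -
      log (1 + β / (α * z ^ 2))) =O[cobounded ℂ] fun z => (((α : ℂ) * z + β / z) ^ 4)⁻¹ := by
    refine (isBigO_div_one_add_sq_sub_log.comp_tendsto ht).trans ?_
    refine (((isBigO_inv_joukowski hα).pow 4).const_mul_left ((β / α : ℂ) ^ 2)).congr
      (fun z => by simp only [Function.comp_apply]; ring) (fun z => inv_pow _ _)
  rw [comap_norm_atTop]
  refine IsBigO.trans ?_ (isBigO_norm_right.2 hrem |>.congr_right fun z => by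
    rw [norm_inv, norm_pow])
  refine IsBigO.of_bound 1 ?_
  filter_upwards [eventually_ne_cobounded 0,
    (ht.const_add 1).eventually_ne (by norm_num : (1 : ℂ) + 0 ≠ 0)] with z hz h1t
  rw [log_norm_sub_joukowski_expansion hα hz h1t, one_mul]
  exact abs_re_le_norm _
end

section
/- For the unit disk Neumann Green's function regular part R(x;ξ) = -(1/(2π))[½ log(1 + |x|²|ξ|² - 2x·ξ) - ½(|ξ|² + |x|²) + 3/4], the limits as x → ξ satisfy R_{ξ₁ξ₁} - R_{ξ₂ξ₂} = (1/π)(ξ₁² - ξ₂²)/(1-|ξ|²)² and R_{ξ₁ξ₂} = (1/π)ξ₁ξ₂/(1-|ξ|²)². -/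
/-!
Write `A = 1 + |x|²|ξ|² - 2 x·ξ` for the argument of the logarithm and `w = |x|² ξ - x`. Then
`∂R/∂ξᵢ = -(1/2π) (wᵢ / A - ξᵢ)` and
`∂²R/∂ξᵢ∂ξⱼ = -(1/2π) ((|x|² δᵢⱼ A - 2 wᵢ wⱼ) / A² - δᵢⱼ)`,
so the diagonal terms cancel in `R₁₁ - R₂₂` and `R₁₂`, leaving `(1/π)(w₁² - w₂²)/A²` and
`(1/π) w₁ w₂ / A²`. These are continuous in `x` wherever `A ≠ 0`, and at `x = ξ` one has
`w = -(1 - |ξ|²) ξ` and `A = (1 - |ξ|²)²`, which is nonzero inside the disk. Derivatives in `ξ₂`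
are reduced to derivatives in `ξ₁` through the symmetry `R(x.swap; ξ.swap) = R(x; ξ)`.
-/

open Filter Topology

/-- Regular part of the Neumann Green's function of the unit disk. -/
noncomputable def Rreg (x ξ : ℝ × ℝ) : ℝ :=
  -(1 / (2 * Real.pi)) *
    ((1 / 2) * Real.log (1 + (x.1 ^ 2 + x.2 ^ 2) * (ξ.1 ^ 2 + ξ.2 ^ 2)
        - 2 * (x.1 * ξ.1 + x.2 * ξ.2))
      - (1 / 2) * ((ξ.1 ^ 2 + ξ.2 ^ 2) + (x.1 ^ 2 + x.2 ^ 2)) + 3 / 4)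

namespace Rreg

noncomputable def logArg (x : ℝ × ℝ) (s t : ℝ) : ℝ :=
  1 + (x.1 ^ 2 + x.2 ^ 2) * (s ^ 2 + t ^ 2) - 2 * (x.1 * s + x.2 * t)

noncomputable def partialFst (x : ℝ × ℝ) (s t : ℝ) : ℝ :=
  -(1 / (2 * Real.pi)) * (((x.1 ^ 2 + x.2 ^ 2) * s - x.1) / logArg x s t - s)

variable (x : ℝ × ℝ) (s t : ℝ)

lemma logArg_swap : logArg x.swap t s = logArg x s t := by
  simp only [logArg, Prod.fst_swap, Prod.snd_swap]; ring

lemma apply_swap : Rreg x.swap (t, s) = Rreg x (s, t) := by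
  simp only [Rreg, Prod.fst_swap, Prod.snd_swap]; ring_nf

lemma logArg_diag (ξ : ℝ × ℝ) : logArg ξ ξ.1 ξ.2 = (1 - (ξ.1 ^ 2 + ξ.2 ^ 2)) ^ 2 := by
  unfold logArg; ring

lemma continuous_logArg : Continuous fun p : ℝ × ℝ => logArg x p.1 p.2 := by
  unfold logArg; fun_prop

lemma continuous_logArg_left : Continuous fun x : ℝ × ℝ => logArg x s t := by
  unfold logArg; fun_prop

lemma tendsto_div_logArg_sq {N : ℝ × ℝ → ℝ} (hN : Continuous N) (h : logArg x s t ≠ 0) :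
    Tendsto (fun y => N y / logArg y s t ^ 2) (𝓝 x) (𝓝 (N x / logArg x s t ^ 2)) :=
  (hN.continuousAt.div ((continuous_logArg_left s t).continuousAt.pow 2) (pow_ne_zero 2 h)).tendsto

lemma hasDerivAt_logArg_fst :
    HasDerivAt (fun s => logArg x s t) (2 * ((x.1 ^ 2 + x.2 ^ 2) * s - x.1)) s := by
  have := ((((hasDerivAt_pow 2 s).add_const (t ^ 2)).const_mul (x.1 ^ 2 + x.2 ^ 2)).const_add 1).sub
    ((((hasDerivAt_id s).const_mul x.1).add_const (x.2 * t)).const_mul 2)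
  refine this.congr_deriv ?_
  simp only [Nat.cast_ofNat, Nat.add_one_sub_one, pow_one, mul_one]; ring

lemma hasDerivAt_logArg_snd :
    HasDerivAt (fun t => logArg x s t) (2 * ((x.1 ^ 2 + x.2 ^ 2) * t - x.2)) t := by
  have := hasDerivAt_logArg_fst x.swap t s
  simp only [logArg_swap, Prod.fst_swap, Prod.snd_swap] at this
  exact this.congr_deriv (by ring)

lemma hasDerivAt_fst (h : logArg x s t ≠ 0) :
    HasDerivAt (fun s => Rreg x (s, t)) (partialFst x s t) s := by
  have := ((((hasDerivAt_logArg_fst x s t).log h).const_mul (1 / 2)).sub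
    ((((hasDerivAt_pow 2 s).add_const (t ^ 2)).add_const (x.1 ^ 2 + x.2 ^ 2)).const_mul (1 / 2))
    |>.add_const (3 / 4)).const_mul (-(1 / (2 * Real.pi)))
  refine this.congr_deriv ?_
  unfold partialFst; field_simp; ring

lemma eventually_deriv_fst (h : logArg x s t ≠ 0) :
    ∀ᶠ p in 𝓝 (s, t), deriv (fun s' => Rreg x (s', p.2)) p.1 = partialFst x p.1 p.2 :=
  ((continuous_logArg x).continuousAt.eventually_ne h).mono fun p hp =>
    (hasDerivAt_fst x p.1 p.2 hp).deriv

lemma hasDerivAt_partialFst_fst (h : logArg x s t ≠ 0) :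
    HasDerivAt (fun s => partialFst x s t)
      (-(1 / (2 * Real.pi)) * (((x.1 ^ 2 + x.2 ^ 2) * logArg x s t
        - 2 * ((x.1 ^ 2 + x.2 ^ 2) * s - x.1) ^ 2) / logArg x s t ^ 2 - 1)) s := by
  have := ((((hasDerivAt_id s).const_mul (x.1 ^ 2 + x.2 ^ 2)).sub_const x.1).div
    (hasDerivAt_logArg_fst x s t) h |>.sub (hasDerivAt_id s)).const_mul (-(1 / (2 * Real.pi)))
  exact this.congr_deriv (by simp only [id]; ring)

lemma hasDerivAt_partialFst_snd (h : logArg x s t ≠ 0) :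
    HasDerivAt (fun t => partialFst x s t)
      (1 / Real.pi * (((x.1 ^ 2 + x.2 ^ 2) * s - x.1) * ((x.1 ^ 2 + x.2 ^ 2) * t - x.2))
        / logArg x s t ^ 2) t := by
  have := (((hasDerivAt_const t ((x.1 ^ 2 + x.2 ^ 2) * s - x.1)).div
    (hasDerivAt_logArg_snd x s t) h).sub_const s).const_mul (-(1 / (2 * Real.pi)))
  exact this.congr_deriv (by field_simp; ring)

lemma deriv_deriv_fst_fst (h : logArg x s t ≠ 0) :
    deriv (fun s => deriv (fun s' => Rreg x (s', t)) s) s =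
      -(1 / (2 * Real.pi)) * (((x.1 ^ 2 + x.2 ^ 2) * logArg x s t
        - 2 * ((x.1 ^ 2 + x.2 ^ 2) * s - x.1) ^ 2) / logArg x s t ^ 2 - 1) := by
  have hev : (fun s => deriv (fun s' => Rreg x (s', t)) s) =ᶠ[𝓝 s] fun s => partialFst x s t :=
    ((Continuous.prodMk_left t).tendsto s).eventually (eventually_deriv_fst x s t h)
  rw [hev.deriv_eq, (hasDerivAt_partialFst_fst x s t h).deriv]

lemma deriv_deriv_fst_snd (h : logArg x s t ≠ 0) :
    deriv (fun t => deriv (fun s' => Rreg x (s', t)) s) t =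
      1 / Real.pi * (((x.1 ^ 2 + x.2 ^ 2) * s - x.1) * ((x.1 ^ 2 + x.2 ^ 2) * t - x.2))
        / logArg x s t ^ 2 := by
  have hev : (fun t => deriv (fun s' => Rreg x (s', t)) s) =ᶠ[𝓝 t] fun t => partialFst x s t :=
    ((Continuous.prodMk_right s).tendsto t).eventually (eventually_deriv_fst x s t h)
  rw [hev.deriv_eq, (hasDerivAt_partialFst_snd x s t h).deriv]

lemma deriv_deriv_fst_fst_sub_snd_snd (ξ : ℝ × ℝ) (h : logArg x ξ.1 ξ.2 ≠ 0) :
    deriv (fun s => deriv (fun t => Rreg x (t, ξ.2)) s) ξ.1 -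
        deriv (fun s => deriv (fun t => Rreg x (ξ.1, t)) s) ξ.2 =
      1 / Real.pi * (((x.1 ^ 2 + x.2 ^ 2) * ξ.1 - x.1) ^ 2
        - ((x.1 ^ 2 + x.2 ^ 2) * ξ.2 - x.2) ^ 2) / logArg x ξ.1 ξ.2 ^ 2 := by
  have h' : logArg x.swap ξ.2 ξ.1 ≠ 0 := by rwa [logArg_swap]
  simp_rw [← apply_swap x ξ.1]
  rw [deriv_deriv_fst_fst x _ _ h, deriv_deriv_fst_fst x.swap _ _ h', logArg_swap]
  simp only [Prod.fst_swap, Prod.snd_swap]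
  field_simp; ring

lemma deriv_deriv_snd_fst (ξ : ℝ × ℝ) (h : logArg x ξ.1 ξ.2 ≠ 0) :
    deriv (fun s => deriv (fun t => Rreg x (s, t)) ξ.2) ξ.1 =
      1 / Real.pi * (((x.1 ^ 2 + x.2 ^ 2) * ξ.1 - x.1) * ((x.1 ^ 2 + x.2 ^ 2) * ξ.2 - x.2))
        / logArg x ξ.1 ξ.2 ^ 2 := by
  have h' : logArg x.swap ξ.2 ξ.1 ≠ 0 := by rwa [logArg_swap]
  simp_rw [← apply_swap x]
  rw [deriv_deriv_fst_snd x.swap _ _ h', logArg_swap]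
  simp only [Prod.fst_swap, Prod.snd_swap]
  ring

end Rreg

/-- As x → ξ, R_{ξ₁ξ₁} - R_{ξ₂ξ₂} → (1/π)(ξ₁²-ξ₂²)/(1-|ξ|²)² and
R_{ξ₁ξ₂} → (1/π)ξ₁ξ₂/(1-|ξ|²)². -/
theorem stmt_11 (ξ : ℝ × ℝ) (hξ : ξ.1 ^ 2 + ξ.2 ^ 2 < 1) :
    Tendsto
      (fun x : ℝ × ℝ =>
        deriv (fun s => deriv (fun t => Rreg x (t, ξ.2)) s) ξ.1 -
          deriv (fun s => deriv (fun t => Rreg x (ξ.1, t)) s) ξ.2)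
      (𝓝 ξ)
      (𝓝 ((1 / Real.pi) * (ξ.1 ^ 2 - ξ.2 ^ 2) / (1 - (ξ.1 ^ 2 + ξ.2 ^ 2)) ^ 2)) ∧
    Tendsto
      (fun x : ℝ × ℝ =>
        deriv (fun s => deriv (fun t => Rreg x (s, t)) ξ.2) ξ.1)
      (𝓝 ξ)
      (𝓝 ((1 / Real.pi) * (ξ.1 * ξ.2) / (1 - (ξ.1 ^ 2 + ξ.2 ^ 2)) ^ 2)) := by
  have hdisk : 1 - (ξ.1 ^ 2 + ξ.2 ^ 2) ≠ 0 := by linarith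
  have hA : Rreg.logArg ξ ξ.1 ξ.2 ≠ 0 := by rw [Rreg.logArg_diag]; exact pow_ne_zero 2 hdisk
  have hev : ∀ᶠ x in 𝓝 ξ, Rreg.logArg x ξ.1 ξ.2 ≠ 0 :=
    (Rreg.continuous_logArg_left ξ.1 ξ.2).continuousAt.eventually_ne hA
  constructor
  · refine Tendsto.congr'
      (hev.mono fun x hx => (Rreg.deriv_deriv_fst_fst_sub_snd_snd x ξ hx).symm) ?_
    convert Rreg.tendsto_div_logArg_sq ξ ξ.1 ξ.2 ?_ hA using 2
    · rw [Rreg.logArg_diag]; field_simp; ring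
    · fun_prop
  · refine Tendsto.congr' (hev.mono fun x hx => (Rreg.deriv_deriv_snd_fst x ξ hx).symm) ?_
    convert Rreg.tendsto_div_logArg_sq ξ ξ.1 ξ.2 ?_ hA using 2
    · rw [Rreg.logArg_diag]; field_simp; ring
    · fun_prop
end

section
/- For r ∈ (0,1), the coefficient function h(r) = (2r⁴-1)/(r²(1-r²)²) is negative for 0 < r < 2^{-1/4} and positive for 2^{-1/4} < r < 1, with h(2^{-1/4}) = 0; hence the correction u₂(0) = (a²+b²)/8 - ((a+b)²/8)(2-r²)/(1-r²)² + ((a²-b²)/8)h(r)cos 2(φ-θ) is minimized over φ at φ = θ for r < 2^{-1/4} and at φ = θ + π/2 for r > 2^{-1/4}, whenever a > b. -/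
/-- Sign of h(r) = (2r⁴-1)/(r²(1-r²)²) and the resulting optimal orientation of the
elliptical trap for the MFPT from the center of the unit disk. -/
theorem stmt_16 (a b r θ : ℝ) (hab : a > b) (hb : b > 0) (hr0 : 0 < r) (hr1 : r < 1) :
    ((r < (2 : ℝ) ^ (-(1 : ℝ) / 4) → (2 * r ^ 4 - 1) / (r ^ 2 * (1 - r ^ 2) ^ 2) < 0) ∧
      ((2 : ℝ) ^ (-(1 : ℝ) / 4) < r → 0 < (2 * r ^ 4 - 1) / (r ^ 2 * (1 - r ^ 2) ^ 2)) ∧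
      (r = (2 : ℝ) ^ (-(1 : ℝ) / 4) → (2 * r ^ 4 - 1) / (r ^ 2 * (1 - r ^ 2) ^ 2) = 0)) ∧
    (r < (2 : ℝ) ^ (-(1 : ℝ) / 4) →
      ∀ φ : ℝ,
        (a ^ 2 + b ^ 2) / 8 - ((a + b) ^ 2 / 8) * (2 - r ^ 2) / (1 - r ^ 2) ^ 2 +
            ((a ^ 2 - b ^ 2) / 8) * ((2 * r ^ 4 - 1) / (r ^ 2 * (1 - r ^ 2) ^ 2)) *
              Real.cos (2 * (θ - θ)) ≤
          (a ^ 2 + b ^ 2) / 8 - ((a + b) ^ 2 / 8) * (2 - r ^ 2) / (1 - r ^ 2) ^ 2 +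
            ((a ^ 2 - b ^ 2) / 8) * ((2 * r ^ 4 - 1) / (r ^ 2 * (1 - r ^ 2) ^ 2)) *
              Real.cos (2 * (φ - θ))) ∧
    ((2 : ℝ) ^ (-(1 : ℝ) / 4) < r →
      ∀ φ : ℝ,
        (a ^ 2 + b ^ 2) / 8 - ((a + b) ^ 2 / 8) * (2 - r ^ 2) / (1 - r ^ 2) ^ 2 +
            ((a ^ 2 - b ^ 2) / 8) * ((2 * r ^ 4 - 1) / (r ^ 2 * (1 - r ^ 2) ^ 2)) *
              Real.cos (2 * ((θ + Real.pi / 2) - θ)) ≤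
          (a ^ 2 + b ^ 2) / 8 - ((a + b) ^ 2 / 8) * (2 - r ^ 2) / (1 - r ^ 2) ^ 2 +
            ((a ^ 2 - b ^ 2) / 8) * ((2 * r ^ 4 - 1) / (r ^ 2 * (1 - r ^ 2) ^ 2)) *
              Real.cos (2 * (φ - θ))) := by
  set c : ℝ := (2 : ℝ) ^ (-(1 : ℝ) / 4) with hc
  have hc0 : 0 < c := Real.rpow_pos_of_pos (by norm_num) _
  have hc4 : c ^ 4 = 1 / 2 := by
    rw [hc, ← Real.rpow_natCast ((2:ℝ) ^ (-(1:ℝ)/4)) 4, ← Real.rpow_mul (by norm_num)]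
    norm_num
  have hden : 0 < r ^ 2 * (1 - r ^ 2) ^ 2 := by
    have h1 : r ^ 2 < 1 := by nlinarith
    exact mul_pos (pow_pos hr0 2) (pow_pos (by linarith) 2)
  have hneg : r < c → (2 * r ^ 4 - 1) / (r ^ 2 * (1 - r ^ 2) ^ 2) < 0 := by
    intro h
    have : r ^ 4 < c ^ 4 := pow_lt_pow_left₀ h hr0.le (by norm_num)
    rw [hc4] at this
    exact div_neg_of_neg_of_pos (by linarith) hden
  have hpos : c < r → 0 < (2 * r ^ 4 - 1) / (r ^ 2 * (1 - r ^ 2) ^ 2) := by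
    intro h
    have : c ^ 4 < r ^ 4 := pow_lt_pow_left₀ h hc0.le (by norm_num)
    rw [hc4] at this
    exact div_pos (by linarith) hden
  have hab2 : 0 < (a ^ 2 - b ^ 2) / 8 := by nlinarith
  refine ⟨⟨hneg, hpos, ?_⟩, ?_, ?_⟩
  · intro h
    have : r ^ 4 = 1 / 2 := by rw [h, hc4]
    rw [div_eq_zero_iff]; left; linarith
  · intro h φ
    have hX : (a ^ 2 - b ^ 2) / 8 * ((2 * r ^ 4 - 1) / (r ^ 2 * (1 - r ^ 2) ^ 2)) < 0 :=
      mul_neg_of_pos_of_neg hab2 (hneg h)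
    have hcos1 : Real.cos (2 * (φ - θ)) ≤ 1 := Real.cos_le_one _
    have : Real.cos (2 * (θ - θ)) = 1 := by norm_num
    rw [this]
    nlinarith
  · intro h φ
    have hX : 0 < (a ^ 2 - b ^ 2) / 8 * ((2 * r ^ 4 - 1) / (r ^ 2 * (1 - r ^ 2) ^ 2)) :=
      mul_pos hab2 (hpos h)
    have hcos1 : -1 ≤ Real.cos (2 * (φ - θ)) := Real.neg_one_le_cos _
    have : Real.cos (2 * ((θ + Real.pi / 2) - θ)) = -1 := by
      rw [show 2 * ((θ + Real.pi / 2) - θ) = Real.pi by ring, Real.cos_pi]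
    rw [this]
    nlinarith
end
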